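/- arXiv:2602.14909 — 4 statements merged into one kernel-verified Lean document; each statement's English description precedes it below -/
import Mathlib

section
/- Let A ∈ ℂ^{n×n}, λ an eigenvalue of A, and v_1,...,v_q a Jordan chain of (Aᵀ, λ), i.e., (λI − Aᵀ)v_1 = 0 and (λI − Aᵀ)v_{i+1} = v_i for i = 1,...,q−1. If v_k ∈ ker(C_{(A,B)}ᵀ) for some k ≤ q, then v_1,...,v_{k−1} ∈ ker(C_{(A,B)}ᵀ). -/
open Matrix Polynomial

/-- The controllability matrix `[B, AB, …, A^{n-1}B]` of the pair `(A,B)`,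
indexed with column index `(k, j)` giving entry `(A^k B) i j`. -/
noncomputable def ctrbMat {n m : ℕ} (A : Matrix (Fin n) (Fin n) ℂ) (B : Matrix (Fin n) (Fin m) ℂ) :
    Matrix (Fin n) (Fin n × Fin m) ℂ :=
  fun i kj => (A ^ (kj.1 : ℕ) * B) i kj.2

private lemma ker_ctrb_iff {n m : ℕ} (A : Matrix (Fin n) (Fin n) ℂ)
    (B : Matrix (Fin n) (Fin m) ℂ) (x : Fin n → ℂ) :
    ((ctrbMat A B)ᵀ).mulVec x = 0 ↔
      ∀ k : ℕ, k < n → ((A ^ k * B)ᵀ).mulVec x = 0 := by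
  constructor
  · intro h k hk
    funext j
    have := congrFun h (⟨k, hk⟩, j)
    simpa [ctrbMat, mulVec, dotProduct, transpose] using this
  · intro h
    funext kj
    obtain ⟨k, j⟩ := kj
    have := congrFun (h (k : ℕ) k.isLt) j
    simpa [ctrbMat, mulVec, dotProduct, transpose] using this

private lemma all_pow_zero {n m : ℕ} (A : Matrix (Fin n) (Fin n) ℂ)
    (B : Matrix (Fin n) (Fin m) ℂ) (x : Fin n → ℂ)
    (h : ∀ k < n, ((A ^ k * B)ᵀ).mulVec x = 0) :
    ∀ k : ℕ, ((A ^ k * B)ᵀ).mulVec x = 0 := by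
  intro k
  rcases Nat.eq_zero_or_pos n with h0 | h0
  · subst h0
    funext j
    simp [mulVec, dotProduct]
  by_cases hk : k < n
  · exact h k hk
  have hcard : Fintype.card (Fin n) = n := Fintype.card_fin n
  have hmon : A.charpoly.Monic := Matrix.charpoly_monic A
  by_cases hz : (X ^ k %ₘ A.charpoly : Polynomial ℂ) = 0
  · have : A ^ k = 0 := by
      rw [Matrix.pow_eq_aeval_mod_charpoly, hz, map_zero]
    simp [this]
  · have hdeg : (X ^ k %ₘ A.charpoly : Polynomial ℂ).natDegree < n := by
      have hd := Polynomial.degree_modByMonic_lt (X ^ k : Polynomial ℂ) hmon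
      rw [Matrix.charpoly_degree_eq_dim, hcard] at hd
      exact (Polynomial.natDegree_lt_iff_degree_lt hz).mpr hd
    have hrep : A ^ k = ∑ i ∈ Finset.range n,
        (X ^ k %ₘ A.charpoly : Polynomial ℂ).coeff i • A ^ i := by
      rw [Matrix.pow_eq_aeval_mod_charpoly, Polynomial.aeval_eq_sum_range' hdeg]
    have hrep' : A ^ k * B = ∑ i ∈ Finset.range n,
        (X ^ k %ₘ A.charpoly : Polynomial ℂ).coeff i • (A ^ i * B) := by
      rw [hrep]
      simp [Matrix.sum_mul, Matrix.smul_mul]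
    have hsum : ∀ (s : Finset ℕ) (M : ℕ → Matrix (Fin m) (Fin n) ℂ),
        (∑ i ∈ s, M i).mulVec x = ∑ i ∈ s, (M i).mulVec x := by
      intro s M
      induction s using Finset.induction_on with
      | empty => simp [Matrix.zero_mulVec]
      | insert _ _ hnot ih => simp [Finset.sum_insert hnot, Matrix.add_mulVec, ih]
    rw [hrep', Matrix.transpose_sum, hsum]
    refine Finset.sum_eq_zero fun i hi => ?_
    rw [Matrix.transpose_smul, Matrix.smul_mulVec, h i (Finset.mem_range.mp hi),
      smul_zero]

private lemma step_zero {n m : ℕ} (A : Matrix (Fin n) (Fin n) ℂ)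
    (B : Matrix (Fin n) (Fin m) ℂ) (μ : ℂ) (x : Fin n → ℂ)
    (hx : ∀ t : ℕ, ((A ^ t * B)ᵀ).mulVec x = 0) :
    ∀ t : ℕ, ((A ^ t * B)ᵀ).mulVec
      ((μ • (1 : Matrix (Fin n) (Fin n) ℂ) - Aᵀ).mulVec x) = 0 := by
  intro t
  have h1 : (μ • (1 : Matrix (Fin n) (Fin n) ℂ) - Aᵀ).mulVec x = μ • x - Aᵀ.mulVec x := by
    rw [Matrix.sub_mulVec, Matrix.smul_mulVec, Matrix.one_mulVec]
  have h2 : (A ^ t * B)ᵀ * Aᵀ = (A ^ (t + 1) * B)ᵀ := by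
    simp [pow_succ', Matrix.transpose_mul, Matrix.mul_assoc]
  rw [h1, Matrix.mulVec_sub, Matrix.mulVec_smul, hx t, Matrix.mulVec_mulVec, h2, hx (t + 1),
    smul_zero, sub_zero]

theorem jordan_chain_prefix_in_ker_ctrb
    {n m : ℕ}
    (A : Matrix (Fin n) (Fin n) ℂ) (B : Matrix (Fin n) (Fin m) ℂ)
    (μ : ℂ) (q : ℕ) (v : ℕ → (Fin n → ℂ))
    (hchain0 : (μ • (1 : Matrix (Fin n) (Fin n) ℂ) - Aᵀ).mulVec (v 0) = 0)
    (hchain : ∀ i, i + 1 < q →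
      (μ • (1 : Matrix (Fin n) (Fin n) ℂ) - Aᵀ).mulVec (v (i + 1)) = v i)
    (k : ℕ) (hk : k < q)
    (hker : ((ctrbMat A B)ᵀ).mulVec (v k) = 0) :
    ∀ i < k, ((ctrbMat A B)ᵀ).mulVec (v i) = 0 := by
  intro i hik
  have key0 : ∀ t : ℕ, ((A ^ t * B)ᵀ).mulVec (v k) = 0 :=
    all_pow_zero A B (v k) ((ker_ctrb_iff A B (v k)).mp hker)
  have key : ∀ d : ℕ, ∀ j : ℕ, j + d = k → ∀ t : ℕ, ((A ^ t * B)ᵀ).mulVec (v j) = 0 := by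
    intro d
    induction d with
    | zero =>
      intro j hj t
      have : j = k := by omega
      subst this
      exact key0 t
    | succ d ih =>
      intro j hj t
      have h1 : (μ • (1 : Matrix (Fin n) (Fin n) ℂ) - Aᵀ).mulVec (v (j + 1)) = v j :=
        hchain j (by omega)
      have := step_zero A B μ (v (j + 1)) (ih (j + 1) (by omega)) t
      rwa [h1] at this
  exact (ker_ctrb_iff A B (v i)).mpr fun t ht => key (k - i) i (by omega) t
end

section
/- Let A ∈ ℂ^{n×n}, λ ∈ ℂ, B ∈ ℂ^{n×m}, and let v_1,...,v_q be a Jordan chain of (Aᵀ, λ). Suppose Bᵀv_i = 0 for all i = 1,...,j−1 where 1 ≤ j ≤ q+1 (the first B-visible index). Then for each k = 1,...,j−1, the kernel of the stacked matrix N_k = [(λI − Aᵀ)^k ; Bᵀ] intersected with span{v_1,...,v_q} equals span{v_1,...,v_k}. -/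
open Matrix

private lemma mulVecLin_pow' {n : ℕ} (M : Matrix (Fin n) (Fin n) ℂ) (k : ℕ) :
    (M ^ k).mulVecLin = M.mulVecLin ^ k := by
  induction k with
  | zero => rw [pow_zero, pow_zero, Matrix.mulVecLin_one]; rfl
  | succ k ih =>
    rw [pow_succ, pow_succ, Matrix.mulVecLin_mul, ih]
    rfl

private lemma chain_pow {n : ℕ} (f : (Fin n → ℂ) →ₗ[ℂ] (Fin n → ℂ))
    (q : ℕ) (v : ℕ → (Fin n → ℂ))
    (h0 : f (v 0) = 0)
    (hc : ∀ i, i + 1 < q → f (v (i + 1)) = v i) :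
    ∀ s i, i < q → (f ^ s) (v i) = if s ≤ i then v (i - s) else 0 := by
  intro s
  induction s with
  | zero => intro i _; simp
  | succ s ih =>
    intro i hi
    have hp : (f ^ (s + 1)) (v i) = (f ^ s) (f (v i)) := by
      rw [pow_succ]; rfl
    cases i with
    | zero =>
      rw [hp, h0, map_zero]
      simp
    | succ i' =>
      rw [hp, hc i' hi, ih i' (by omega), Nat.succ_sub_succ]
      by_cases h : s ≤ i'
      · rw [if_pos h, if_pos (Nat.succ_le_succ h)]
      · rw [if_neg h, if_neg (fun hh => h (Nat.succ_le_succ_iff.mp hh))]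

private lemma chain_indep {n : ℕ} (f : (Fin n → ℂ) →ₗ[ℂ] (Fin n → ℂ))
    (q : ℕ) (v : ℕ → (Fin n → ℂ))
    (hv0 : v 0 ≠ 0)
    (h0 : f (v 0) = 0)
    (hc : ∀ i, i + 1 < q → f (v (i + 1)) = v i)
    (c : ℕ → ℂ) (hsum : ∑ i ∈ Finset.range q, c i • v i = 0) :
    ∀ i, i < q → c i = 0 := by
  by_contra hcon
  push_neg at hcon
  obtain ⟨i0, hi0q, hi0⟩ := hcon
  set S := (Finset.range q).filter (fun i => c i ≠ 0) with hS
  have hSne : S.Nonempty := ⟨i0, by simp [hS, hi0q, hi0]⟩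
  set t := S.max' hSne with ht
  have htS : t ∈ S := S.max'_mem hSne
  have htq : t < q := Finset.mem_range.mp (Finset.mem_filter.mp htS).1
  have hct : c t ≠ 0 := (Finset.mem_filter.mp htS).2
  have happ : ∑ i ∈ Finset.range q, (f ^ t) (c i • v i) = 0 := by
    rw [← map_sum, hsum, map_zero]
  have heval : ∀ i ∈ Finset.range q, (f ^ t) (c i • v i)
      = c i • (if t ≤ i then v (i - t) else 0) := by
    intro i hi
    rw [_root_.map_smul, chain_pow f q v h0 hc t i (Finset.mem_range.mp hi)]
  rw [Finset.sum_congr rfl heval] at happ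
  have hsingle : ∑ i ∈ Finset.range q, c i • (if t ≤ i then v (i - t) else 0)
      = c t • v 0 := by
    rw [Finset.sum_eq_single t]
    · simp
    · intro i hi hne
      rcases lt_or_gt_of_ne hne with h | h
      · rw [if_neg (by omega), smul_zero]
      · have hci : c i = 0 := by
          by_contra hci
          have hiS : i ∈ S := Finset.mem_filter.mpr ⟨hi, hci⟩
          have := S.le_max' i hiS
          omega
        rw [hci, zero_smul]
    · intro h
      exact absurd (Finset.mem_range.mpr htq) h
  rw [hsingle] at happ
  exact hv0 ((smul_eq_zero.mp happ).resolve_left hct)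

theorem ker_Nk_inter_chain_span
    {n m : ℕ}
    (A : Matrix (Fin n) (Fin n) ℂ) (B : Matrix (Fin n) (Fin m) ℂ)
    (μ : ℂ) (q : ℕ) (v : ℕ → (Fin n → ℂ))
    (hv0 : v 0 ≠ 0)
    (hchain0 : (μ • (1 : Matrix (Fin n) (Fin n) ℂ) - Aᵀ).mulVec (v 0) = 0)
    (hchain : ∀ i, i + 1 < q →
      (μ • (1 : Matrix (Fin n) (Fin n) ℂ) - Aᵀ).mulVec (v (i + 1)) = v i)
    -- `jm = j - 1`, where `j` is the first `B`-visible index, `1 ≤ j ≤ q+1`: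
    (jm : ℕ) (hjm : jm ≤ q)
    (hB : ∀ i, i < jm → (Bᵀ).mulVec (v i) = 0)
    (k : ℕ) (hk1 : 1 ≤ k) (hkj : k ≤ jm) :
    LinearMap.ker ((μ • (1 : Matrix (Fin n) (Fin n) ℂ) - Aᵀ) ^ k).mulVecLin
        ⊓ LinearMap.ker (Bᵀ).mulVecLin
        ⊓ Submodule.span ℂ (Set.range (fun i : Fin q => v (i : ℕ)))
      = Submodule.span ℂ (Set.range (fun i : Fin k => v (i : ℕ))) := by
  set M := μ • (1 : Matrix (Fin n) (Fin n) ℂ) - Aᵀ with hM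
  set f := M.mulVecLin with hf
  have h0 : f (v 0) = 0 := hchain0
  have hc : ∀ i, i + 1 < q → f (v (i + 1)) = v i := hchain
  have hkq : k ≤ q := le_trans hkj hjm
  apply le_antisymm
  · intro x hx
    rw [Submodule.mem_inf, Submodule.mem_inf] at hx
    obtain ⟨⟨hker, hBx⟩, hspan⟩ := hx
    rw [Submodule.mem_span_range_iff_exists_fun ℂ] at hspan
    obtain ⟨α, hα⟩ := hspan
    set a : ℕ → ℂ := fun i => if h : i < q then α ⟨i, h⟩ else 0 with ha
    have hxa : ∑ i ∈ Finset.range q, a i • v i = x := by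
      rw [← hα, ← Fin.sum_univ_eq_sum_range (fun i => a i • v i) q]
      apply Finset.sum_congr rfl
      intro i _
      simp [ha, i.isLt]
    have hkerx : (f ^ k) x = 0 := by
      have h := LinearMap.mem_ker.mp hker
      rwa [mulVecLin_pow'] at h
    have hcomp : (f ^ k) x = ∑ t ∈ Finset.range (q - k), a (k + t) • v t := by
      rw [← hxa, map_sum]
      have h1 : ∀ i ∈ Finset.range q, (f ^ k) (a i • v i)
          = a i • (if k ≤ i then v (i - k) else 0) := by
        intro i hi
        rw [_root_.map_smul, chain_pow f q v h0 hc k i (Finset.mem_range.mp hi)]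
      rw [Finset.sum_congr rfl h1,
        ← Finset.sum_filter_add_sum_filter_not (Finset.range q) (fun i => k ≤ i)]
      have h2 : ∑ i ∈ (Finset.range q).filter (fun i => ¬ k ≤ i),
          a i • (if k ≤ i then v (i - k) else 0) = 0 := by
        apply Finset.sum_eq_zero
        intro i hi
        rw [if_neg (Finset.mem_filter.mp hi).2, smul_zero]
      rw [h2, add_zero]
      have h3 : (Finset.range q).filter (fun i => k ≤ i) = Finset.Ico k q := by
        ext i
        simp [Finset.mem_filter, Finset.mem_Ico, and_comm]
      rw [h3, Finset.sum_Ico_eq_sum_range]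
      apply Finset.sum_congr rfl
      intro t _
      rw [if_pos (Nat.le_add_right k t), Nat.add_sub_cancel_left]
    have hzero : ∀ t, t < q - k → a (k + t) = 0 :=
      chain_indep f (q - k) v hv0 h0 (fun i hi => hc i (by omega)) (fun t => a (k + t))
        (by rw [← hcomp]; exact hkerx)
    have hsub : ∑ i ∈ Finset.range k, a i • v i = ∑ i ∈ Finset.range q, a i • v i := by
      apply Finset.sum_subset (Finset.range_subset_range.mpr hkq)
      intro i hi hik
      have hik' : k ≤ i := by
        by_contra h
        exact hik (Finset.mem_range.mpr (by omega))
      have hiq : i < q := Finset.mem_range.mp hi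
      have hai : a (k + (i - k)) = 0 := hzero (i - k) (by omega)
      rw [show k + (i - k) = i by omega] at hai
      rw [hai, zero_smul]
    rw [← hxa, ← hsub, ← Fin.sum_univ_eq_sum_range (fun i => a i • v i) k]
    apply Submodule.sum_mem
    intro i _
    exact Submodule.smul_mem _ _ (Submodule.subset_span ⟨i, rfl⟩)
  · rw [Submodule.span_le]
    rintro _ ⟨i, rfl⟩
    have hiq : (i : ℕ) < q := by omega
    simp only [SetLike.mem_coe, Submodule.mem_inf]
    refine ⟨⟨?_, ?_⟩, ?_⟩
    · rw [LinearMap.mem_ker, mulVecLin_pow']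
      rw [chain_pow f q v h0 hc k i hiq, if_neg (by omega)]
    · rw [LinearMap.mem_ker]
      exact hB i (by omega)
    · exact Submodule.subset_span ⟨⟨i, hiq⟩, rfl⟩
end

section
/- Functional observability of (A,C,F), defined as ker(O_{(A,C)}) ⊆ ker(O_{(A,F)}), holds if and only if for every eigenvalue λ of A and every Jordan chain v_1,...,v_q of (A, λ) (i.e., (λI − A)v_1 = 0, (λI − A)v_{i+1} = v_i), the condition Cv_1 = ⋯ = Cv_k = 0 for some k ≤ q implies Fv_1 = ⋯ = Fv_k = 0. -/
open Matrix

/-- The observability matrix `[M; MA; …; MA^{n-1}]` of the pair `(A,M)`. -/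
noncomputable def obsMat {n : ℕ} {p : Type*} (A : Matrix (Fin n) (Fin n) ℂ)
    (M : Matrix p (Fin n) ℂ) : Matrix (Fin n × p) (Fin n) ℂ :=
  fun ki j => (M * A ^ (ki.1 : ℕ)) ki.2 j

private lemma pow_mem_span_aux {n : ℕ} (A : Matrix (Fin n) (Fin n) ℂ) (m : ℕ) :
    A ^ m ∈ Submodule.span ℂ {B : Matrix (Fin n) (Fin n) ℂ | ∃ i < n, A ^ i = B} := by
  induction m using Nat.strong_induction_on with
  | _ m ih =>
    by_cases hm : m < n
    · exact Submodule.subset_span ⟨m, hm, rfl⟩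
    · have hA : A ^ n = ∑ i ∈ Finset.range n, (-(A.charpoly.coeff i)) • A ^ i := by
        have h0 := A.aeval_self_charpoly
        rw [Polynomial.aeval_eq_sum_range, A.charpoly_natDegree_eq_dim, Fintype.card_fin,
          Finset.sum_range_succ] at h0
        have hc : A.charpoly.coeff n = 1 := by
          have := A.charpoly_monic.coeff_natDegree
          rwa [A.charpoly_natDegree_eq_dim, Fintype.card_fin] at this
        rw [hc, one_smul] at h0
        have : A ^ n = -∑ i ∈ Finset.range n, A.charpoly.coeff i • A ^ i := by
          linear_combination (norm := module) h0
        rw [this, ← Finset.sum_neg_distrib]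
        simp [neg_smul]
      obtain ⟨t, rfl⟩ : ∃ t, m = t + n := ⟨m - n, by omega⟩
      rw [pow_add, hA, Finset.mul_sum]
      refine Submodule.sum_mem _ fun i hi => ?_
      rw [Matrix.mul_smul, ← pow_add]
      exact Submodule.smul_mem _ _ (ih (t + i) (by simp at hi; omega))

private lemma obs_ker_iff {n p : ℕ} (A : Matrix (Fin n) (Fin n) ℂ)
    (M : Matrix (Fin p) (Fin n) ℂ) (x : Fin n → ℂ) :
    x ∈ LinearMap.ker (obsMat A M).mulVecLin ↔ ∀ m : ℕ, (M * A ^ m).mulVec x = 0 := by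
  have hrow : ∀ (k : Fin n) (j : Fin p),
      (obsMat A M).mulVec x (k, j) = (M * A ^ (k : ℕ)).mulVec x j := by
    intro k j
    simp [obsMat, mulVec, dotProduct]
  constructor
  · intro h m
    have hlt : ∀ i < n, (M * A ^ i).mulVec x = 0 := by
      intro i hi
      ext j
      have := congrFun (show (obsMat A M).mulVec x = 0 from h) (⟨i, hi⟩, j)
      rw [hrow] at this
      simpa using this
    have : ∀ B ∈ Submodule.span ℂ {B : Matrix (Fin n) (Fin n) ℂ | ∃ i < n, A ^ i = B},
        (M * B).mulVec x = 0 := by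
      intro B hB
      induction hB using Submodule.span_induction with
      | mem B hB => obtain ⟨i, hi, rfl⟩ := hB; exact hlt i hi
      | zero => simp
      | add B B' _ _ hB hB' => rw [Matrix.mul_add, Matrix.add_mulVec, hB, hB', add_zero]
      | smul a B _ hB => rw [Matrix.mul_smul, Matrix.smul_mulVec, hB, smul_zero]
    exact this _ (pow_mem_span_aux A m)
  · intro h
    have : (obsMat A M).mulVec x = 0 := by
      ext ⟨k, j⟩
      rw [hrow]
      simp [h (k : ℕ)]
    simpa [LinearMap.mem_ker] using this

theorem FO_iff_jordan_chain_condition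
    {n pc r : ℕ}
    (A : Matrix (Fin n) (Fin n) ℂ) (C : Matrix (Fin pc) (Fin n) ℂ)
    (F : Matrix (Fin r) (Fin n) ℂ) :
    LinearMap.ker (obsMat A C).mulVecLin ≤
        LinearMap.ker (obsMat A F).mulVecLin ↔
      ∀ (μ : ℂ) (q : ℕ) (v : ℕ → (Fin n → ℂ)),
        v 0 ≠ 0 →
        (μ • (1 : Matrix (Fin n) (Fin n) ℂ) - A).mulVec (v 0) = 0 →
        (∀ i, i + 1 < q →
          (μ • (1 : Matrix (Fin n) (Fin n) ℂ) - A).mulVec (v (i + 1)) = v i) →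
        ∀ k ≤ q, (∀ i < k, C.mulVec (v i) = 0) → ∀ i < k, F.mulVec (v i) = 0 := by
  constructor
  · -- forward direction
    intro h μ q v hv0 hB0 hBchain k hkq hCv i hik
    have hA0 : A.mulVec (v 0) = μ • v 0 := by
      rw [sub_mulVec, smul_mulVec, one_mulVec, sub_eq_zero] at hB0
      exact hB0.symm
    have hAchain : ∀ i, i + 1 < q → A.mulVec (v (i + 1)) = μ • v (i + 1) - v i := by
      intro i hi
      have h1 := hBchain i hi
      rw [sub_mulVec, smul_mulVec, one_mulVec] at h1
      rw [← h1]
      abel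
    have key : ∀ i, i < k → ∀ m : ℕ, (C * A ^ m).mulVec (v i) = 0 := by
      intro i
      induction i using Nat.strong_induction_on with
      | _ i ihs =>
        intro hik
        have hstep : ∀ m : ℕ, (C * A ^ (m + 1)).mulVec (v i)
            = (C * A ^ m).mulVec (A.mulVec (v i)) := by
          intro m
          rw [mulVec_mulVec, Matrix.mul_assoc, ← pow_succ]
        rcases i with _ | j
        · intro m
          induction m with
          | zero => simpa using hCv 0 hik
          | succ m ihm =>
            rw [hstep, hA0, mulVec_smul, ihm, smul_zero]
        · intro m
          induction m with
          | zero => simpa using hCv (j + 1) hik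
          | succ m ihm =>
            rw [hstep, hAchain j (lt_of_lt_of_le hik hkq), Matrix.mulVec_sub, mulVec_smul,
              ihm, smul_zero, ihs j (by omega) (by omega), sub_zero]
    have hvW : v i ∈ LinearMap.ker (obsMat A C).mulVecLin :=
      (obs_ker_iff A C _).2 (key i hik)
    have := (obs_ker_iff A F _).1 (h hvW) 0
    simpa using this
  · -- backward direction
    intro h x hx
    rw [obs_ker_iff] at hx ⊢
    set W : Submodule ℂ (Fin n → ℂ) := ⨅ m : ℕ, LinearMap.ker (C * A ^ m).mulVecLin with hW
    have memW : ∀ y, y ∈ W ↔ ∀ m : ℕ, (C * A ^ m).mulVec y = 0 := by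
      intro y
      simp [hW, Submodule.mem_iInf, LinearMap.mem_ker]
    have hinv : ∀ y ∈ W, A.mulVecLin y ∈ W := by
      intro y hy
      rw [memW] at hy ⊢
      intro m
      rw [mulVecLin_apply, mulVec_mulVec, Matrix.mul_assoc, ← pow_succ]
      exact hy (m + 1)
    have hinvB : ∀ (ν : ℂ) (y : Fin n → ℂ), y ∈ W →
        (ν • (1 : Matrix (Fin n) (Fin n) ℂ) - A).mulVec y ∈ W := by
      intro ν y hy
      rw [sub_mulVec, smul_mulVec, one_mulVec]
      exact W.sub_mem (W.smul_mem ν hy) (by simpa using hinv y hy)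
    have main : ∀ y ∈ W, F.mulVec y = 0 := by
      intro y hy
      set g : Module.End ℂ W := (A.mulVecLin).restrict hinv with hg
      have htop := Module.End.iSup_maxGenEigenspace_eq_top g
      have hmem : (⟨y, hy⟩ : W) ∈ ⨆ μ : ℂ, g.maxGenEigenspace μ := by
        rw [htop]; trivial
      have hres : F.mulVec ((⟨y, hy⟩ : W) : Fin n → ℂ) = 0 := by
        refine Submodule.iSup_induction (motive := fun z : W => F.mulVec (z : Fin n → ℂ) = 0)
          _ hmem ?_ (by simp) ?_
        · intro μ z hz
          obtain ⟨m, hm⟩ := (Module.End.mem_maxGenEigenspace g μ z).1 hz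
          -- translate the eigen-equation to matrices
          have coe_one : ∀ (w : W), (((g - μ • (1 : Module.End ℂ W)) w : W) : Fin n → ℂ)
              = (A - μ • (1 : Matrix (Fin n) (Fin n) ℂ)).mulVec (w : Fin n → ℂ) := by
            intro w
            have h1 : ((g w : W) : Fin n → ℂ) = A.mulVec (w : Fin n → ℂ) := by
              simp [hg, LinearMap.restrict_apply]
            simp [LinearMap.sub_apply, LinearMap.smul_apply, h1, sub_mulVec,
              smul_mulVec, one_mulVec]
          have coe_pow : ∀ (m : ℕ) (w : W), (((g - μ • (1 : Module.End ℂ W)) ^ m) w : Fin n → ℂ)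
              = ((A - μ • (1 : Matrix (Fin n) (Fin n) ℂ)) ^ m).mulVec (w : Fin n → ℂ) := by
            intro m
            induction m with
            | zero => intro w; simp
            | succ m ih =>
              intro w
              rw [pow_succ, pow_succ, Module.End.mul_apply, ih, coe_one, mulVec_mulVec]
          have hDz : ((A - μ • (1 : Matrix (Fin n) (Fin n) ℂ)) ^ m).mulVec (z : Fin n → ℂ)
              = 0 := by
            rw [← coe_pow, hm]
            rfl
          have hBz : ((μ • (1 : Matrix (Fin n) (Fin n) ℂ) - A) ^ m).mulVec (z : Fin n → ℂ)
              = 0 := by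
            have hneg : (μ • (1 : Matrix (Fin n) (Fin n) ℂ) - A)
                = -(A - μ • (1 : Matrix (Fin n) (Fin n) ℂ)) :=
              (neg_sub _ _).symm
            rw [hneg, neg_pow, ← mulVec_mulVec, hDz, mulVec_zero]
          by_cases hz0 : (z : Fin n → ℂ) = 0
          · simp [hz0]
          · have hex : ∃ m, ((μ • (1 : Matrix (Fin n) (Fin n) ℂ) - A) ^ m).mulVec
                (z : Fin n → ℂ) = 0 := ⟨m, hBz⟩
            set m₀ := Nat.find hex with hm₀
            have hspec := Nat.find_spec hex
            rw [← hm₀] at hspec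
            have hm₀pos : 0 < m₀ := by
              rcases Nat.eq_zero_or_pos m₀ with h0 | h0
              · rw [h0, pow_zero, one_mulVec] at hspec
                exact absurd hspec hz0
              · exact h0
            set v : ℕ → Fin n → ℂ := fun i =>
              ((μ • (1 : Matrix (Fin n) (Fin n) ℂ) - A) ^ (m₀ - 1 - i)).mulVec
                (z : Fin n → ℂ) with hv
            have hBpowW : ∀ j : ℕ, ((μ • (1 : Matrix (Fin n) (Fin n) ℂ) - A) ^ j).mulVec
                (z : Fin n → ℂ) ∈ W := by
              intro j
              induction j with
              | zero => simp only [pow_zero, one_mulVec]; exact z.2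
              | succ j ih =>
                rw [pow_succ', ← mulVec_mulVec]
                exact hinvB μ _ ih
            have hvW : ∀ i, v i ∈ W := fun i => hBpowW _
            have hv0 : v 0 ≠ 0 := by
              intro hc
              refine Nat.find_min hex (show m₀ - 1 < m₀ by omega) ?_
              simpa only [hv, Nat.sub_zero] using hc
            have hstep0 : (μ • (1 : Matrix (Fin n) (Fin n) ℂ) - A).mulVec (v 0) = 0 := by
              show (μ • (1 : Matrix (Fin n) (Fin n) ℂ) - A).mulVec
                (((μ • (1 : Matrix (Fin n) (Fin n) ℂ) - A) ^ (m₀ - 1 - 0)).mulVec _) = 0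
              rw [mulVec_mulVec, ← pow_succ', show m₀ - 1 - 0 + 1 = m₀ by omega]
              exact hspec
            have hchain : ∀ i, i + 1 < m₀ →
                (μ • (1 : Matrix (Fin n) (Fin n) ℂ) - A).mulVec (v (i + 1)) = v i := by
              intro i hi
              show (μ • (1 : Matrix (Fin n) (Fin n) ℂ) - A).mulVec
                (((μ • (1 : Matrix (Fin n) (Fin n) ℂ) - A) ^ (m₀ - 1 - (i + 1))).mulVec _)
                = ((μ • (1 : Matrix (Fin n) (Fin n) ℂ) - A) ^ (m₀ - 1 - i)).mulVec _
              rw [mulVec_mulVec, ← pow_succ', show m₀ - 1 - (i + 1) + 1 = m₀ - 1 - i by omega]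
            have hC : ∀ i, i < m₀ → C.mulVec (v i) = 0 := by
              intro i _
              have := (memW _).1 (hvW i) 0
              simpa using this
            have hF := h μ m₀ v hv0 hstep0 hchain m₀ le_rfl hC (m₀ - 1) (by omega)
            have hvlast : v (m₀ - 1) = (z : Fin n → ℂ) := by
              show ((μ • (1 : Matrix (Fin n) (Fin n) ℂ) - A) ^ (m₀ - 1 - (m₀ - 1))).mulVec _ = _
              rw [Nat.sub_self, pow_zero, one_mulVec]
            rwa [hvlast] at hF
        · intro z z' hz hz'
          show F.mulVec ((z + z' : W) : Fin n → ℂ) = 0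
          rw [Submodule.coe_add, Matrix.mulVec_add, hz, hz', add_zero]
      exact hres
    intro m
    rw [← mulVec_mulVec]
    apply main
    rw [memW]
    intro j
    rw [mulVec_mulVec, Matrix.mul_assoc, ← pow_add]
    exact hx (j + m)
end

section
/- Let λ be an eigenvalue of A and v_1,...,v_q a Jordan chain of (A, λ) with Cv_1 = ⋯ = Cv_k = 0 for some k ≤ q. Then v_1,...,v_k all lie in the unobservable subspace ker(O_{(A,C)}), i.e., CA^ℓ v_i = 0 for all ℓ = 0,...,n−1 and i = 1,...,k. -/
open Matrix

theorem jordan_chain_prefix_unobservable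
    {n pc : ℕ}
    (A : Matrix (Fin n) (Fin n) ℂ) (C : Matrix (Fin pc) (Fin n) ℂ)
    (μ : ℂ) (q : ℕ) (v : ℕ → (Fin n → ℂ))
    (hchain0 : (μ • (1 : Matrix (Fin n) (Fin n) ℂ) - A).mulVec (v 0) = 0)
    (hchain : ∀ i, i + 1 < q →
      (μ • (1 : Matrix (Fin n) (Fin n) ℂ) - A).mulVec (v (i + 1)) = v i)
    (k : ℕ) (hk : k ≤ q)
    (hC : ∀ i < k, C.mulVec (v i) = 0) :
    ∀ l < n, ∀ i < k, (C * A ^ l).mulVec (v i) = 0 := by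
  have hA0 : A.mulVec (v 0) = μ • v 0 := by
    have h := hchain0
    rw [Matrix.sub_mulVec, Matrix.smul_mulVec, Matrix.one_mulVec, sub_eq_zero] at h
    exact h.symm
  have hAS : ∀ j, j + 1 < q → A.mulVec (v (j + 1)) = μ • v (j + 1) - v j := by
    intro j hj
    have h := hchain j hj
    rw [Matrix.sub_mulVec, Matrix.smul_mulVec, Matrix.one_mulVec] at h
    rw [← h, sub_sub_cancel]
  have key : ∀ l, ∀ i < k, C.mulVec ((A ^ l).mulVec (v i)) = 0 := by
    intro l
    induction l with
    | zero => intro i hi; simpa using hC i hi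
    | succ l ih =>
      intro i hi
      have hpow : (A ^ (l + 1)).mulVec (v i) = (A ^ l).mulVec (A.mulVec (v i)) := by
        rw [Matrix.mulVec_mulVec, ← pow_succ]
      rw [hpow]
      cases i with
      | zero =>
        rw [hA0, Matrix.mulVec_smul, Matrix.mulVec_smul]
        rw [ih 0 hi]
        simp
      | succ j =>
        rw [hAS j (lt_of_lt_of_le hi hk), Matrix.mulVec_sub, Matrix.mulVec_smul,
          Matrix.mulVec_sub, Matrix.mulVec_smul, ih (j + 1) hi,
          ih j (Nat.lt_of_succ_lt hi)]
        simp
  intro l _ i hi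
  rw [← Matrix.mulVec_mulVec]
  exact key l i hi
end
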